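/- Let f₁, f₂ : (0,∞) → ℝ be continuously differentiable and let c ∈ ℝ be a constant such that 2 f₁(u) + 2u·f₁'(u) + f₂'(b) = c for all u > 0 and all b > 0. Then there exist constants k₁, k₂, k₃ ∈ ℝ such that f₂(b) = k₁ b + k₂ for all b > 0 and f₁(u) = 2k₃/u + (c − k₁)/2 for all u > 0. Consequently, within the family of conformal Killing fields ξ = (a f₁(a²b) − (a/(2b)) f₂(b), f₂(b)) of the scaled Kantowski–Sachs supermetric, those with constant conformal factor c are exactly the linear combinations of the three Killing fields ξ₁ = (−a,b), ξ₂ = (−a/(2b),1), ξ₃ = (1/(ab),0) and c times the homothetic field h = (a/2, 0). -/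

import Mathlib

open Set

/-! The equation separates: with `u` fixed, `f₂'` is constant, so `f₂` is affine; with `b` fixed,
`f₁ + u f₁' = (u f₁)'` is constant, so `u f₁` is affine and `f₁` is a multiple of `1/u` plus a
constant. The decomposition of `ξ` into Killing and homothetic fields is then algebra. -/

theorem IsOpen.eqOn_affine_of_deriv_eq_const {s : Set ℝ} (hs : IsOpen s)
    (hs' : IsPreconnected s) {f : ℝ → ℝ} (hf : DifferentiableOn ℝ f s) {k x₀ : ℝ}
    (hx₀ : x₀ ∈ s) (hf' : ∀ x ∈ s, deriv f x = k) :
    ∀ x ∈ s, f x = k * (x - x₀) + f x₀ := by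
  have hline : DifferentiableOn ℝ (fun x => k * (x - x₀) + f x₀) s := by fun_prop
  refine hs.eqOn_of_deriv_eq hs' hf hline (fun x hx => ?_) hx₀ (by ring)
  rw [hf' x hx]
  simp

theorem eq_div_add_of_add_mul_deriv_eq {f : ℝ → ℝ} (hf : DifferentiableOn ℝ f (Ioi 0)) {m : ℝ}
    (hode : ∀ u ∈ Ioi (0 : ℝ), f u + u * deriv f u = m) :
    ∀ u ∈ Ioi (0 : ℝ), f u = (f 1 - m) / u + m := by
  have hderiv : ∀ u ∈ Ioi (0 : ℝ), deriv (fun u => u * f u) u = m := fun u hu => by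
    rw [deriv_fun_mul differentiableAt_fun_id
      ((hf u hu).differentiableAt (isOpen_Ioi.mem_nhds hu)), deriv_id'', one_mul, hode u hu]
  have haffine := isOpen_Ioi.eqOn_affine_of_deriv_eq_const (f := fun u => u * f u)
    isPreconnected_Ioi (differentiableOn_id.mul hf) (mem_Ioi.mpr one_pos) hderiv
  intro u hu
  have hu₀ : u ≠ 0 := (mem_Ioi.mp hu).ne'
  have hu_affine := haffine u hu
  simp only [one_mul] at hu_affine
  field_simp
  linarith

theorem constant_conformal_factor_forces_killing_combination
    (f₁ f₂ : ℝ → ℝ) (c : ℝ)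
    (hf₁ : ContDiffOn ℝ 1 f₁ (Set.Ioi 0))
    (hf₂ : ContDiffOn ℝ 1 f₂ (Set.Ioi 0))
    (heq : ∀ u : ℝ, 0 < u → ∀ b : ℝ, 0 < b →
      2 * f₁ u + 2 * u * deriv f₁ u + deriv f₂ b = c) :
    ∃ k₁ k₂ k₃ : ℝ,
      (∀ b : ℝ, 0 < b → f₂ b = k₁ * b + k₂)
      ∧ (∀ u : ℝ, 0 < u → f₁ u = 2 * k₃ / u + (c - k₁) / 2)
      ∧ (∀ a b : ℝ, 0 < a → 0 < b →
          (a * f₁ (a ^ 2 * b) - (a / (2 * b)) * f₂ b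
              = k₁ * (-a) + k₂ * (-(a / (2 * b))) + 2 * k₃ * (1 / (a * b)) + c * (a / 2))
          ∧ (f₂ b = k₁ * b + k₂ * 1 + 2 * k₃ * 0 + c * 0)) := by
  set k₁ := deriv f₂ 1
  have hderiv₂ : ∀ b ∈ Ioi (0 : ℝ), deriv f₂ b = k₁ := fun b hb => by
    linarith [heq 1 one_pos b hb, heq 1 one_pos 1 one_pos]
  have hode₁ : ∀ u ∈ Ioi (0 : ℝ), f₁ u + u * deriv f₁ u = (c - k₁) / 2 := fun u hu => by
    linarith [heq u hu 1 one_pos]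
  have hf₂_affine := isOpen_Ioi.eqOn_affine_of_deriv_eq_const isPreconnected_Ioi
    (hf₂.differentiableOn one_ne_zero) (mem_Ioi.mpr one_pos) hderiv₂
  have hf₁_eq := eq_div_add_of_add_mul_deriv_eq (hf₁.differentiableOn one_ne_zero) hode₁
  refine ⟨k₁, f₂ 1 - k₁, (f₁ 1 - (c - k₁) / 2) / 2, fun b hb => ?_, fun u hu => ?_,
    fun a b ha hb => ?_⟩
  · rw [hf₂_affine b hb]; ring
  · rw [hf₁_eq u hu]; ring
  · have hab : a ^ 2 * b ∈ Ioi (0 : ℝ) := mem_Ioi.mpr (by positivity)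
    rw [hf₁_eq _ hab, hf₂_affine b hb]
    constructor
    · field_simp
      ring
    · ring
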